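/- arXiv:1505.06896 — 5 statements merged into one kernel-verified Lean document; each statement's English description precedes it below -/
import Mathlib

section
/- Let X ⊆ {d,t,b,4,5}, let Δ₁, Δ₂, and Σ be full sequents, and let Γ{ } be an output context. If (fm(Δ₁)∧fm(Δ₂))⊃fm(Σ) is provable in HCK+X, then so is (fm(Γ{Δ₁})∧fm(Γ{Δ₂}))⊃fm(Γ{Σ}). -/
/-! # Constructive modal logic: formulas and Hilbert systems -/

inductive Formula : Type
  | var : Nat → Formula
  | bot : Formula
  | and : Formula → Formula → Formula
  | or  : Formula → Formula → Formula
  | imp : Formula → Formula → Formula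
  | box : Formula → Formula
  | dia : Formula → Formula
  deriving DecidableEq

/-- ⊤ abbreviates ⊥⊃⊥ -/
def Formula.top : Formula := Formula.imp Formula.bot Formula.bot

/-- The five modal axioms d, t, b, 4, 5. -/
inductive Ax : Type
  | d | t | b | four | five
  deriving DecidableEq

/-- The formula scheme corresponding to each modal axiom. -/
def axForm : Ax → Formula → Formula
  | .d, A => Formula.imp (.box A) (.dia A)
  | .t, A => Formula.and (.imp A (.dia A)) (.imp (.box A) A)
  | .b, A => Formula.and (.imp A (.box (.dia A))) (.imp (.dia (.box A)) A)
  | .four, A => Formula.and (.imp (.dia (.dia A)) (.dia A)) (.imp (.box A) (.box (.box A)))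
  | .five, A => Formula.and (.imp (.dia A) (.box (.dia A))) (.imp (.dia (.box A)) (.box A))

/-- The Hilbert system HCK+X: a complete axiomatization of intuitionistic
propositional logic, plus k1 and k2, plus the modal axiom schemes in X,
closed under modus ponens and necessitation. -/
inductive Hck (X : Set Ax) : Formula → Prop
  | imp1 (A B : Formula) : Hck X (.imp A (.imp B A))
  | imp2 (A B C : Formula) :
      Hck X (.imp (.imp A (.imp B C)) (.imp (.imp A B) (.imp A C)))
  | andI (A B : Formula) : Hck X (.imp A (.imp B (.and A B)))
  | andE1 (A B : Formula) : Hck X (.imp (.and A B) A)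
  | andE2 (A B : Formula) : Hck X (.imp (.and A B) B)
  | orI1 (A B : Formula) : Hck X (.imp A (.or A B))
  | orI2 (A B : Formula) : Hck X (.imp B (.or A B))
  | orE (A B C : Formula) :
      Hck X (.imp (.imp A C) (.imp (.imp B C) (.imp (.or A B) C)))
  | exfalso (A : Formula) : Hck X (.imp .bot A)
  | k1 (A B : Formula) : Hck X (.imp (.box (.imp A B)) (.imp (.box A) (.box B)))
  | k2 (A B : Formula) : Hck X (.imp (.box (.imp A B)) (.imp (.dia A) (.dia B)))
  | ax {x : Ax} (A : Formula) : x ∈ X → Hck X (axForm x A)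
  | mp {A B : Formula} : Hck X (.imp A B) → Hck X A → Hck X B
  | nec {A : Formula} : Hck X A → Hck X (.box A)

/-! # Nested sequents -/

/-- LHS sequents: Φ ::= ∅ | A• | [Φ] | Φ,Φ -/
inductive LHS : Type
  | emp : LHS
  | fml : Formula → LHS
  | br : LHS → LHS
  | comma : LHS → LHS → LHS

/-- RHS sequents: Ψ ::= A∘ | [Φ,Ψ] -/
inductive RHS : Type
  | fml : Formula → RHS
  | br : LHS → RHS → RHS

/-- A full sequent: Φ,Ψ with exactly one output formula. -/
structure FullSeq where
  L : LHS
  R : RHS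

/-- Corresponding formula of an LHS sequent. -/
def LHS.fm : LHS → Formula
  | .emp => Formula.top
  | .fml A => A
  | .br Φ => Formula.dia Φ.fm
  | .comma Φ₁ Φ₂ => Formula.and Φ₁.fm Φ₂.fm

/-- Corresponding formula of an RHS sequent. -/
def RHS.fm : RHS → Formula
  | .fml A => A
  | .br Φ Ψ => Formula.box (Formula.imp Φ.fm Ψ.fm)

/-- Corresponding formula of a full sequent: fm(Φ,Ψ) = fm(Φ) ⊃ fm(Ψ). -/
def FullSeq.fm (S : FullSeq) : Formula := Formula.imp S.L.fm S.R.fm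

/-! # Contexts -/

/-- An output context: Γ₁•,[Γ₂•,[…,[Γₙ•,{ }]…]]. -/
inductive OutCtx : Type
  | hole : LHS → OutCtx
  | cons : LHS → OutCtx → OutCtx

/-- Filling an output context with an LHS sequent yields an LHS sequent. -/
def OutCtx.fillL : OutCtx → LHS → LHS
  | .hole Φ, Δ => Φ.comma Δ
  | .cons Φ C, Δ => Φ.comma (LHS.br (C.fillL Δ))

/-- Filling an output context with nothing (∅) yields an LHS sequent. -/
def OutCtx.fillE : OutCtx → LHS
  | .hole Φ => Φ
  | .cons Φ C => Φ.comma (LHS.br C.fillE)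

/-- Filling an output context with an RHS sequent yields a full sequent. -/
def OutCtx.fillR : OutCtx → RHS → FullSeq
  | .hole Φ, Ψ => ⟨Φ, Ψ⟩
  | .cons Φ C, Ψ => ⟨Φ, RHS.br (C.fillR Ψ).L (C.fillR Ψ).R⟩

/-- Filling an output context with a full sequent yields a full sequent. -/
def OutCtx.fillF : OutCtx → FullSeq → FullSeq
  | .hole Φ, S => ⟨Φ.comma S.L, S.R⟩
  | .cons Φ C, S => ⟨Φ, RHS.br (C.fillF S).L (C.fillF S).R⟩

/-- Depth of an output context: number of brackets around the hole. -/
def OutCtx.depth : OutCtx → Nat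
  | .hole _ => 0
  | .cons _ C => C.depth + 1

def OutCtx.addL : LHS → OutCtx → OutCtx
  | Φ, .hole Φ' => .hole (Φ.comma Φ')
  | Φ, .cons Φ' C => .cons (Φ.comma Φ') C

/-- Composition of output contexts (plugging one into the hole of the other). -/
def OutCtx.comp : OutCtx → OutCtx → OutCtx
  | .hole Φ, C => OutCtx.addL Φ C
  | .cons Φ C, C' => .cons Φ (C.comp C')

/-- An input context Γ'{Λ{ },Π∘} with Γ'{ }, Λ{ } output contexts, Π∘ an RHS
sequent.  Filled with an LHS sequent it yields a full sequent. -/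
structure InCtx where
  outer : OutCtx
  inner : OutCtx
  out : RHS

/-- Filling an input context with an LHS sequent. -/
def InCtx.fill (G : InCtx) (Δ : LHS) : FullSeq :=
  G.outer.fillF ⟨G.inner.fillL Δ, G.out⟩

/-- Output pruning Γ↓{ } = Γ'{Λ{ }} of an input context Γ'{Λ{ },Π∘}. -/
def InCtx.prune (G : InCtx) : OutCtx := G.outer.comp G.inner

/-- Depth of an input context. -/
def InCtx.depth (G : InCtx) : Nat := G.outer.depth + G.inner.depth

/-- [Φ]ⁿ : n brackets around an LHS sequent. -/
def LHS.brn : Nat → LHS → LHS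
  | 0, Φ => Φ
  | n+1, Φ => LHS.br (LHS.brn n Φ)

/-- [Σ]ⁿ : n brackets around a full sequent (as a full sequent). -/
def FullSeq.nest : Nat → FullSeq → FullSeq
  | 0, S => S
  | n+1, S => ⟨LHS.emp, RHS.br (FullSeq.nest n S).L (FullSeq.nest n S).R⟩

/-! # Equivalence of sequents (associativity/commutativity/unit of comma) -/

inductive SEqL : LHS → LHS → Prop
  | refl (Φ : LHS) : SEqL Φ Φ
  | symm {a b : LHS} : SEqL a b → SEqL b a
  | trans {a b c : LHS} : SEqL a b → SEqL b c → SEqL a c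
  | comm (a b : LHS) : SEqL (a.comma b) (b.comma a)
  | assoc (a b c : LHS) : SEqL ((a.comma b).comma c) (a.comma (b.comma c))
  | unit (a : LHS) : SEqL (LHS.emp.comma a) a
  | congComma {a a' b b' : LHS} : SEqL a a' → SEqL b b' → SEqL (a.comma b) (a'.comma b')
  | congBr {a a' : LHS} : SEqL a a' → SEqL a.br a'.br

inductive SEqR : RHS → RHS → Prop
  | refl (Ψ : RHS) : SEqR Ψ Ψ
  | symm {a b : RHS} : SEqR a b → SEqR b a
  | trans {a b c : RHS} : SEqR a b → SEqR b c → SEqR a c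
  | congBr {Φ Φ' : LHS} {Ψ Ψ' : RHS} :
      SEqL Φ Φ' → SEqR Ψ Ψ' → SEqR (RHS.br Φ Ψ) (RHS.br Φ' Ψ')

def SEq (S T : FullSeq) : Prop := SEqL S.L T.L ∧ SEqR S.R T.R

/-! # Inference rules -/

inductive RuleName : Type
  | id | botL | andL | andR | orL | orR | impL | impR
  | boxL | boxR | diaL | diaHatL | diaR | cont
  | weak | cut | nec
  | dDiaR | dBoxL | tDiaR | tBoxL | fourDiaR | fourBoxL
  | dSt | tSt | bSt | fourSt | fiveSt
  | s4R | s4L | s4Rdia | s4Lbox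
  | sbSt | s5St | s5bSt | sb5St
  deriving DecidableEq

/-- Rule instances: `Step r prems concl` means that inferring the full sequent
`concl` from the list of full sequents `prems` is an instance of the rule `r`. -/
inductive Step : RuleName → List FullSeq → FullSeq → Prop
  /- id: Γ{a•,a∘} -/
  | id (Γ : OutCtx) (a : Nat) :
      Step .id [] (Γ.fillF ⟨.fml (.var a), .fml (.var a)⟩)
  /- ⊥•: Γ{⊥•,Π∘} -/
  | botL (Γ : OutCtx) (Pn : RHS) :
      Step .botL [] (Γ.fillF ⟨.fml .bot, Pn⟩)
  /- ∧•: from Γ{A•,B•} infer Γ{(A∧B)•} -/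
  | andL (Γ : InCtx) (A B : Formula) :
      Step .andL [Γ.fill ((LHS.fml A).comma (.fml B))] (Γ.fill (.fml (A.and B)))
  /- ∧∘: from Γ{A∘} and Γ{B∘} infer Γ{(A∧B)∘} -/
  | andR (Γ : OutCtx) (A B : Formula) :
      Step .andR [Γ.fillR (.fml A), Γ.fillR (.fml B)] (Γ.fillR (.fml (A.and B)))
  /- ∨•: from Γ{A•,Π∘} and Γ{B•,Π∘} infer Γ{(A∨B)•,Π∘} -/
  | orL (Γ : OutCtx) (Pn : RHS) (A B : Formula) :
      Step .orL [Γ.fillF ⟨.fml A, Pn⟩, Γ.fillF ⟨.fml B, Pn⟩]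
        (Γ.fillF ⟨.fml (A.or B), Pn⟩)
  /- ∨∘: from Γ{A∘} (or Γ{B∘}) infer Γ{(A∨B)∘} -/
  | orR1 (Γ : OutCtx) (A B : Formula) :
      Step .orR [Γ.fillR (.fml A)] (Γ.fillR (.fml (A.or B)))
  | orR2 (Γ : OutCtx) (A B : Formula) :
      Step .orR [Γ.fillR (.fml B)] (Γ.fillR (.fml (A.or B)))
  /- ⊃•: from Γ↓{A∘} and Γ{B•} infer Γ{(A⊃B)•} -/
  | impL (Γ : InCtx) (A B : Formula) :
      Step .impL [Γ.prune.fillR (.fml A), Γ.fill (.fml B)] (Γ.fill (.fml (A.imp B)))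
  /- ⊃∘: from Γ{A•,B∘} infer Γ{(A⊃B)∘} -/
  | impR (Γ : OutCtx) (A B : Formula) :
      Step .impR [Γ.fillF ⟨.fml A, .fml B⟩] (Γ.fillR (.fml (A.imp B)))
  /- □•: from Γ{[A•,Δ]} infer Γ{(□A)•,[Δ]}, output elsewhere resp. in Δ -/
  | boxLIn (Γ : InCtx) (Δ : LHS) (A : Formula) :
      Step .boxL [Γ.fill (LHS.br ((LHS.fml A).comma Δ))]
        (Γ.fill ((LHS.fml A.box).comma Δ.br))
  | boxLOut (Γ : OutCtx) (Δ : FullSeq) (A : Formula) :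
      Step .boxL [Γ.fillR (.br ((LHS.fml A).comma Δ.L) Δ.R)]
        (Γ.fillF ⟨.fml A.box, .br Δ.L Δ.R⟩)
  /- □∘: from Γ{[A∘]} infer Γ{(□A)∘} -/
  | boxR (Γ : OutCtx) (A : Formula) :
      Step .boxR [Γ.fillR (.br .emp (.fml A))] (Γ.fillR (.fml A.box))
  /- ◇•: from Γ{[A•]} infer Γ{(◇A)•} -/
  | diaL (Γ : InCtx) (A : Formula) :
      Step .diaL [Γ.fill (LHS.br (.fml A))] (Γ.fill (.fml A.dia))
  /- ◇̂•: from Γ{[A•],Π∘} infer Γ{(◇A)•,Π∘} -/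
  | diaHatL (Γ : OutCtx) (Pn : RHS) (A : Formula) :
      Step .diaHatL [Γ.fillF ⟨LHS.br (.fml A), Pn⟩] (Γ.fillF ⟨.fml A.dia, Pn⟩)
  /- ◇∘: from Γ{[A∘,Δ]} infer Γ{(◇A)∘,[Δ]} -/
  | diaR (Γ : OutCtx) (Δ : LHS) (A : Formula) :
      Step .diaR [Γ.fillR (.br Δ (.fml A))] (Γ.fillF ⟨Δ.br, .fml A.dia⟩)
  /- cont: from Γ{Δ•,Δ•} infer Γ{Δ•} -/
  | cont (Γ : InCtx) (Δ : LHS) :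
      Step .cont [Γ.fill (Δ.comma Δ)] (Γ.fill Δ)
  /- weak: from Γ{∅} infer Γ{Δ•} -/
  | weak (Γ : InCtx) (Δ : LHS) :
      Step .weak [Γ.fill .emp] (Γ.fill Δ)
  /- cut: from Γ↓{A∘} and Γ{A•} infer Γ{∅} -/
  | cut (Γ : InCtx) (A : Formula) :
      Step .cut [Γ.prune.fillR (.fml A), Γ.fill (.fml A)] (Γ.fill .emp)
  /- nec: from Γ infer [Γ] -/
  | nec (S : FullSeq) :
      Step .nec [S] ⟨.emp, .br S.L S.R⟩
  /- ◇∘d: from Γ{[A∘]} infer Γ{(◇A)∘} -/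
  | dDiaR (Γ : OutCtx) (A : Formula) :
      Step .dDiaR [Γ.fillR (.br .emp (.fml A))] (Γ.fillR (.fml A.dia))
  /- □•d: from Γ{[A•]} infer Γ{(□A)•} -/
  | dBoxL (Γ : InCtx) (A : Formula) :
      Step .dBoxL [Γ.fill (LHS.br (.fml A))] (Γ.fill (.fml A.box))
  /- ◇∘t: from Γ{A∘} infer Γ{(◇A)∘} -/
  | tDiaR (Γ : OutCtx) (A : Formula) :
      Step .tDiaR [Γ.fillR (.fml A)] (Γ.fillR (.fml A.dia))
  /- □•t: from Γ{A•} infer Γ{(□A)•} -/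
  | tBoxL (Γ : InCtx) (A : Formula) :
      Step .tBoxL [Γ.fill (.fml A)] (Γ.fill (.fml A.box))
  /- ◇∘4: from Γ{[(◇A)∘,Δ]} infer Γ{(◇A)∘,[Δ]} -/
  | fourDiaR (Γ : OutCtx) (Δ : LHS) (A : Formula) :
      Step .fourDiaR [Γ.fillR (.br Δ (.fml A.dia))] (Γ.fillF ⟨Δ.br, .fml A.dia⟩)
  /- □•4: from Γ{[(□A)•,Δ]} infer Γ{(□A)•,[Δ]} -/
  | fourBoxLIn (Γ : InCtx) (Δ : LHS) (A : Formula) :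
      Step .fourBoxL [Γ.fill (LHS.br ((LHS.fml A.box).comma Δ))]
        (Γ.fill ((LHS.fml A.box).comma Δ.br))
  | fourBoxLOut (Γ : OutCtx) (Δ : FullSeq) (A : Formula) :
      Step .fourBoxL [Γ.fillR (.br ((LHS.fml A.box).comma Δ.L) Δ.R)]
        (Γ.fillF ⟨.fml A.box, .br Δ.L Δ.R⟩)
  /- d•: from Γ{[∅]} infer Γ{∅} -/
  | dSt (Γ : InCtx) :
      Step .dSt [Γ.fill (LHS.br .emp)] (Γ.fill .emp)
  /- t•: from Γ{[Σ]} infer Γ{Σ} -/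
  | tStIn (Γ : InCtx) (Sg : LHS) :
      Step .tSt [Γ.fill Sg.br] (Γ.fill Sg)
  | tStOut (Γ : OutCtx) (Sg : FullSeq) :
      Step .tSt [Γ.fillR (.br Sg.L Sg.R)] (Γ.fillF Sg)
  /- 4•: from Γ{[Σ]} infer Γ{[[Σ]]} -/
  | fourStIn (Γ : InCtx) (Sg : LHS) :
      Step .fourSt [Γ.fill Sg.br] (Γ.fill Sg.br.br)
  | fourStOut (Γ : OutCtx) (Sg : FullSeq) :
      Step .fourSt [Γ.fillR (.br Sg.L Sg.R)] (Γ.fillR (.br .emp (.br Sg.L Sg.R)))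
  /- b•: from Γ{[[Σ],Δ]} infer Γ{Σ,[Δ]} -/
  | bStIn (Γ : InCtx) (Sg Δ : LHS) :
      Step .bSt [Γ.fill (LHS.br (Sg.br.comma Δ))] (Γ.fill (Sg.comma Δ.br))
  | bStSig (Γ : OutCtx) (Sg : FullSeq) (Δ : LHS) :
      Step .bSt [Γ.fillR (.br Δ (.br Sg.L Sg.R))] (Γ.fillF ⟨Sg.L.comma Δ.br, Sg.R⟩)
  | bStDel (Γ : OutCtx) (Sg : LHS) (Δ : FullSeq) :
      Step .bSt [Γ.fillR (.br (Sg.br.comma Δ.L) Δ.R)] (Γ.fillF ⟨Sg, .br Δ.L Δ.R⟩)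
  /- 5•: from Γ{[[Σ],Δ]} infer Γ{[Σ],[Δ]} -/
  | fiveStIn (Γ : InCtx) (Sg Δ : LHS) :
      Step .fiveSt [Γ.fill (LHS.br (Sg.br.comma Δ))] (Γ.fill (Sg.br.comma Δ.br))
  | fiveStSig (Γ : OutCtx) (Sg : FullSeq) (Δ : LHS) :
      Step .fiveSt [Γ.fillR (.br Δ (.br Sg.L Sg.R))] (Γ.fillF ⟨Δ.br, .br Sg.L Sg.R⟩)
  | fiveStDel (Γ : OutCtx) (Sg : LHS) (Δ : FullSeq) :
      Step .fiveSt [Γ.fillR (.br (Sg.br.comma Δ.L) Δ.R)] (Γ.fillF ⟨Sg.br, .br Δ.L Δ.R⟩)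
  /- s4∘: from Γ{Δ{(◇A)∘}} infer Γ{(◇A)∘,Δ{∅}} -/
  | s4R (Γ Δ : OutCtx) (A : Formula) :
      Step .s4R [Γ.fillF (Δ.fillR (.fml A.dia))] (Γ.fillF ⟨Δ.fillE, .fml A.dia⟩)
  /- s4•: from Γ{Δ{(□A)•}} infer Γ{(□A)•,Δ{∅}} -/
  | s4LIn (Γ : InCtx) (Δ : OutCtx) (A : Formula) :
      Step .s4L [Γ.fill (Δ.fillL (.fml A.box))] (Γ.fill ((LHS.fml A.box).comma Δ.fillE))
  | s4LOut (Γ : OutCtx) (Δ : InCtx) (A : Formula) :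
      Step .s4L [Γ.fillF (Δ.fill (.fml A.box))]
        (Γ.fillF ⟨(LHS.fml A.box).comma (Δ.fill .emp).L, (Δ.fill .emp).R⟩)
  /- s4∘◇: from Γ{[Δ{A∘}]} infer Γ{(◇A)∘,[Δ{∅}]} -/
  | s4Rdia (Γ Δ : OutCtx) (A : Formula) :
      Step .s4Rdia [Γ.fillR (.br (Δ.fillR (.fml A)).L (Δ.fillR (.fml A)).R)]
        (Γ.fillF ⟨Δ.fillE.br, .fml A.dia⟩)
  /- s4•□: from Γ{[Δ{A•}]} infer Γ{(□A)•,[Δ{∅}]} -/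
  | s4LboxIn (Γ : InCtx) (Δ : OutCtx) (A : Formula) :
      Step .s4Lbox [Γ.fill (LHS.br (Δ.fillL (.fml A)))]
        (Γ.fill ((LHS.fml A.box).comma Δ.fillE.br))
  | s4LboxOut (Γ : OutCtx) (Δ : InCtx) (A : Formula) :
      Step .s4Lbox [Γ.fillR (.br (Δ.fill (.fml A)).L (Δ.fill (.fml A)).R)]
        (Γ.fillF ⟨.fml A.box, .br (Δ.fill .emp).L (Δ.fill .emp).R⟩)
  /- sb•: from Γ{Δ{[Σ]ⁿ}} infer Γ{Σ,Δ{∅}}, n the depth of Δ{ } -/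
  | sbStIn (Γ : InCtx) (Δ : OutCtx) (Sg : LHS) :
      Step .sbSt [Γ.fill (Δ.fillL (LHS.brn Δ.depth Sg))] (Γ.fill (Sg.comma Δ.fillE))
  | sbStMid (Γ : OutCtx) (Δ : InCtx) (Sg : LHS) :
      Step .sbSt [Γ.fillF (Δ.fill (LHS.brn Δ.depth Sg))]
        (Γ.fillF ⟨Sg.comma (Δ.fill .emp).L, (Δ.fill .emp).R⟩)
  | sbStOut (Γ Δ : OutCtx) (Sg : FullSeq) :
      Step .sbSt [Γ.fillF (Δ.fillF (FullSeq.nest Δ.depth Sg))]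
        (Γ.fillF ⟨Sg.L.comma Δ.fillE, Sg.R⟩)
  /- s5•: from Γ{Δ{[Σ]}} infer Γ{[Σ],Δ{∅}} -/
  | s5StIn (Γ : InCtx) (Δ : OutCtx) (Sg : LHS) :
      Step .s5St [Γ.fill (Δ.fillL Sg.br)] (Γ.fill (Sg.br.comma Δ.fillE))
  | s5StMid (Γ : OutCtx) (Δ : InCtx) (Sg : LHS) :
      Step .s5St [Γ.fillF (Δ.fill Sg.br)]
        (Γ.fillF ⟨Sg.br.comma (Δ.fill .emp).L, (Δ.fill .emp).R⟩)
  | s5StOut (Γ Δ : OutCtx) (Sg : FullSeq) :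
      Step .s5St [Γ.fillF (Δ.fillF ⟨.emp, .br Sg.L Sg.R⟩)]
        (Γ.fillF ⟨Δ.fillE, .br Sg.L Sg.R⟩)
  /- s5b•: from Γ{Δ{[Σ]ᵏ}} infer Γ{Σ,Δ{∅}}, 1 ≤ k ≤ depth of Δ{ } -/
  | s5bStIn (Γ : InCtx) (Δ : OutCtx) (Sg : LHS) (k : Nat)
      (h1 : 1 ≤ k) (h2 : k ≤ Δ.depth) :
      Step .s5bSt [Γ.fill (Δ.fillL (LHS.brn k Sg))] (Γ.fill (Sg.comma Δ.fillE))
  | s5bStMid (Γ : OutCtx) (Δ : InCtx) (Sg : LHS) (k : Nat)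
      (h1 : 1 ≤ k) (h2 : k ≤ Δ.depth) :
      Step .s5bSt [Γ.fillF (Δ.fill (LHS.brn k Sg))]
        (Γ.fillF ⟨Sg.comma (Δ.fill .emp).L, (Δ.fill .emp).R⟩)
  | s5bStOut (Γ Δ : OutCtx) (Sg : FullSeq) (k : Nat)
      (h1 : 1 ≤ k) (h2 : k ≤ Δ.depth) :
      Step .s5bSt [Γ.fillF (Δ.fillF (FullSeq.nest k Sg))]
        (Γ.fillF ⟨Sg.L.comma Δ.fillE, Sg.R⟩)
  /- sb5•: from Γ{Δ{[Σ]ᵏ}} infer Γ{[Σ],Δ{∅}}, 1 ≤ k ≤ depth of Δ{ } -/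
  | sb5StIn (Γ : InCtx) (Δ : OutCtx) (Sg : LHS) (k : Nat)
      (h1 : 1 ≤ k) (h2 : k ≤ Δ.depth) :
      Step .sb5St [Γ.fill (Δ.fillL (LHS.brn k Sg))] (Γ.fill (Sg.br.comma Δ.fillE))
  | sb5StMid (Γ : OutCtx) (Δ : InCtx) (Sg : LHS) (k : Nat)
      (h1 : 1 ≤ k) (h2 : k ≤ Δ.depth) :
      Step .sb5St [Γ.fillF (Δ.fill (LHS.brn k Sg))]
        (Γ.fillF ⟨Sg.br.comma (Δ.fill .emp).L, (Δ.fill .emp).R⟩)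
  | sb5StOut (Γ Δ : OutCtx) (Sg : FullSeq) (k : Nat)
      (h1 : 1 ≤ k) (h2 : k ≤ Δ.depth) :
      Step .sb5St [Γ.fillF (Δ.fillF (FullSeq.nest k Sg))]
        (Γ.fillF ⟨Δ.fillE, .br Sg.L Sg.R⟩)

/-! # Derivations -/

/-- `Deriv R n S`: the full sequent S has a derivation of height at most n
using the rules in R (sequents are treated up to AC-unit equivalence of
comma). -/
inductive Deriv (R : Set RuleName) : Nat → FullSeq → Prop
  | step {r : RuleName} {prems : List FullSeq} {S S' : FullSeq} {n : Nat} :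
      r ∈ R → Step r prems S → (∀ P ∈ prems, Deriv R n P) → SEq S S' →
      Deriv R (n+1) S'

/-- Provability in the system given by the rule set R. -/
def Provable (R : Set RuleName) (S : FullSeq) : Prop := ∃ n, Deriv R n S

/-- Derivations from a set of hypotheses (for derivability of rules). -/
inductive DerivFrom (R : Set RuleName) (H : Set FullSeq) : FullSeq → Prop
  | hyp {S S' : FullSeq} : S ∈ H → SEq S S' → DerivFrom R H S'
  | step {r : RuleName} {prems : List FullSeq} {S S' : FullSeq} :
      r ∈ R → Step r prems S → (∀ P ∈ prems, DerivFrom R H P) → SEq S S' →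
      DerivFrom R H S'

/-! # Rule sets -/

/-- The rules of NCK. -/
def NCKrules : Set RuleName :=
  {.id, .botL, .andL, .andR, .orL, .orR, .impL, .impR, .boxL, .boxR,
   .diaL, .diaR, .cont}

/-- The rules of NCK' (◇• replaced by ◇̂•). -/
def NCKP : Set RuleName :=
  {.id, .botL, .andL, .andR, .orL, .orR, .impL, .impR, .boxL, .boxR,
   .diaHatL, .diaR, .cont}

/-- X^{↓}: the logical ◇∘- and □•-rules for the axioms in X ⊆ {d,t,4}. -/
def lgRules (X : Set Ax) : Set RuleName := fun r =>
  (Ax.d ∈ X ∧ (r = .dDiaR ∨ r = .dBoxL)) ∨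
  (Ax.t ∈ X ∧ (r = .tDiaR ∨ r = .tBoxL)) ∨
  (Ax.four ∈ X ∧ (r = .fourDiaR ∨ r = .fourBoxL))

/-- The structural rule corresponding to a modal axiom. -/
def stRule : Ax → RuleName
  | .d => .dSt
  | .t => .tSt
  | .b => .bSt
  | .four => .fourSt
  | .five => .fiveSt

/-- Y•: the structural rules for the axioms in Y. -/
def stRules (Y : Set Ax) : Set RuleName := fun r => ∃ y ∈ Y, r = stRule y

/-- X^{↓}_s : the super variant of X^{↓}. -/
def lgRulesS (X : Set Ax) : Set RuleName := fun r =>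
  (r ∈ lgRules X ∧ r ≠ .fourDiaR ∧ r ≠ .fourBoxL) ∨
  (Ax.four ∈ X ∧ (r = .s4R ∨ r = .s4L ∨ r = .s4Rdia ∨ r = .s4Lbox))

/-- Y•_s : the super variant of Y•. -/
def stRulesS (Y : Set Ax) : Set RuleName := fun r =>
  (r ∈ stRules Y ∧ r ≠ .bSt ∧ r ≠ .fiveSt) ∨
  (Ax.b ∈ Y ∧ Ax.five ∉ Y ∧ r = .sbSt) ∨
  (Ax.five ∈ Y ∧ Ax.b ∉ Y ∧ r = .s5St) ∨
  (Ax.b ∈ Y ∧ Ax.five ∈ Y ∧ (r = .s5bSt ∨ r = .sb5St))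

/-- A safe pair of axiom sets. -/
def SafePair (X Y : Set Ax) : Prop :=
  X ⊆ {Ax.t, Ax.four} ∧ Y ⊆ {Ax.d, Ax.b, Ax.five} ∧
  (Ax.t ∈ X → Ax.five ∈ Y → Ax.b ∈ Y) ∧
  ((Ax.b ∈ Y ∨ Ax.five ∈ Y) → Ax.four ∈ X)

/-! # Auxiliary: Hilbert derivations from hypotheses and deduction theorem -/

/-- Hilbert derivation from a list of hypotheses (no necessitation on
hypotheses; theorems of HCK+X may be imported). -/
inductive HF (X : Set Ax) : List Formula → Formula → Prop
  | hyp {H : List Formula} {A : Formula} : A ∈ H → HF X H A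
  | thm {H : List Formula} {A : Formula} : Hck X A → HF X H A
  | mp {H : List Formula} {A B : Formula} :
      HF X H (A.imp B) → HF X H A → HF X H B

lemma hck_id (X : Set Ax) (A : Formula) : Hck X (A.imp A) :=
  .mp (.mp (.imp2 A (A.imp A) A) (.imp1 A (A.imp A))) (.imp1 A A)

lemma HF.ded' {X : Set Ax} {G : List Formula} {B : Formula} (h : HF X G B) :
    ∀ (A : Formula) (H : List Formula), G = A :: H → HF X H (A.imp B) := by
  induction h with
  | hyp hm =>
      intro A H hG; subst hG
      rcases List.mem_cons.mp hm with rfl | hm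
      · exact .thm (hck_id X _)
      · exact .mp (.thm (.imp1 _ _)) (.hyp hm)
  | thm ht => intro A H _; exact .mp (.thm (.imp1 _ _)) (.thm ht)
  | mp _ _ ih1 ih2 =>
      intro A H hG
      exact .mp (.mp (.thm (.imp2 _ _ _)) (ih1 A H hG)) (ih2 A H hG)

lemma HF.ded {X : Set Ax} {H : List Formula} {A B : Formula}
    (h : HF X (A :: H) B) : HF X H (A.imp B) := h.ded' A H rfl

lemma HF.toHck {X : Set Ax} {A : Formula} (h : HF X [] A) : Hck X A := by
  induction h with
  | hyp hm => simp at hm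
  | thm ht => exact ht
  | mp _ _ ih1 ih2 => exact ih1.mp ih2

/-- Lemma 4.8: for full sequents Δ₁, Δ₂, Σ and an output
context Γ{ }, if (fm(Δ₁)∧fm(Δ₂))⊃fm(Σ) is provable in HCK+X then so is
(fm(Γ{Δ₁})∧fm(Γ{Δ₂}))⊃fm(Γ{Σ}). -/
theorem statement10 (X : Set Ax) (Δ₁ Δ₂ Sg : FullSeq) (Γ : OutCtx)
    (h : Hck X ((Δ₁.fm.and Δ₂.fm).imp Sg.fm)) :
    Hck X (((Γ.fillF Δ₁).fm.and (Γ.fillF Δ₂).fm).imp (Γ.fillF Sg).fm) := by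
  induction Γ with
  | hole Φ =>
      simp only [OutCtx.fillF, FullSeq.fm, LHS.fm] at *
      set P := Φ.fm
      set L1 := Δ₁.L.fm; set R1 := Δ₁.R.fm
      set L2 := Δ₂.L.fm; set R2 := Δ₂.R.fm
      set LS := Sg.L.fm; set RS := Sg.R.fm
      apply HF.toHck
      apply HF.ded
      apply HF.ded
      -- hyps : [P∧LS, (P∧L1⊃R1)∧(P∧L2⊃R2)]
      have h2 : HF X [(P.and LS), (((P.and L1).imp R1).and ((P.and L2).imp R2))]
          (P.and LS) := .hyp (List.Mem.head _)
      have h1 : HF X [(P.and LS), (((P.and L1).imp R1).and ((P.and L2).imp R2))]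
          (((P.and L1).imp R1).and ((P.and L2).imp R2)) :=
        .hyp (List.Mem.tail _ (List.Mem.head _))
      have hP := HF.mp (.thm (.andE1 _ _)) h2
      have hLS := HF.mp (.thm (.andE2 _ _)) h2
      have f1 : HF X [(P.and LS), (((P.and L1).imp R1).and ((P.and L2).imp R2))]
          (L1.imp R1) := by
        apply HF.ded
        have hL : HF X [L1, (P.and LS), (((P.and L1).imp R1).and ((P.and L2).imp R2))] L1 := .hyp (List.Mem.head _)
        have hP' : HF X [L1, (P.and LS), (((P.and L1).imp R1).and ((P.and L2).imp R2))] P := .mp (.thm (.andE1 _ _))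
          (.hyp (List.Mem.tail _ (List.Mem.head _)))
        have h1' : HF X [L1, (P.and LS), (((P.and L1).imp R1).and ((P.and L2).imp R2))] (((P.and L1).imp R1).and ((P.and L2).imp R2)) :=
          .hyp (List.Mem.tail _ (List.Mem.tail _ (List.Mem.head _)))
        exact .mp (.mp (.thm (.andE1 _ _)) h1')
          (.mp (.mp (.thm (.andI _ _)) hP') hL)
      have f2 : HF X [(P.and LS), (((P.and L1).imp R1).and ((P.and L2).imp R2))]
          (L2.imp R2) := by
        apply HF.ded
        have hL : HF X [L2, (P.and LS), (((P.and L1).imp R1).and ((P.and L2).imp R2))] L2 := .hyp (List.Mem.head _)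
        have hP' : HF X [L2, (P.and LS), (((P.and L1).imp R1).and ((P.and L2).imp R2))] P := .mp (.thm (.andE1 _ _))
          (.hyp (List.Mem.tail _ (List.Mem.head _)))
        have h1' : HF X [L2, (P.and LS), (((P.and L1).imp R1).and ((P.and L2).imp R2))] (((P.and L1).imp R1).and ((P.and L2).imp R2)) :=
          .hyp (List.Mem.tail _ (List.Mem.tail _ (List.Mem.head _)))
        exact .mp (.mp (.thm (.andE2 _ _)) h1')
          (.mp (.mp (.thm (.andI _ _)) hP') hL)
      exact .mp (.mp (.thm h) (.mp (.mp (.thm (.andI _ _)) f1) f2)) hLS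
  | cons Φ C ih =>
      simp only [OutCtx.fillF, FullSeq.fm, RHS.fm] at *
      set P := Φ.fm
      set F1 := (Formula.imp (C.fillF Δ₁).L.fm (C.fillF Δ₁).R.fm)
      set F2 := (Formula.imp (C.fillF Δ₂).L.fm (C.fillF Δ₂).R.fm)
      set FS := (Formula.imp (C.fillF Sg).L.fm (C.fillF Sg).R.fm)
      have hbox : Hck X ((Formula.box (F1.and F2)).imp (Formula.box FS)) :=
        (Hck.k1 _ _).mp (Hck.nec ih)
      have hk1 : Hck X ((Formula.box F1).imp
          (Formula.box (F2.imp (F1.and F2)))) :=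
        (Hck.k1 _ _).mp (Hck.nec (Hck.andI F1 F2))
      apply HF.toHck
      apply HF.ded
      apply HF.ded
      -- hyps : [P, (P⊃□F1)∧(P⊃□F2)]
      have hP : HF X [P, ((P.imp (Formula.box F1)).and (P.imp (Formula.box F2)))]
          P := .hyp (List.Mem.head _)
      have h1 : HF X [P, ((P.imp (Formula.box F1)).and (P.imp (Formula.box F2)))]
          ((P.imp (Formula.box F1)).and (P.imp (Formula.box F2))) :=
        .hyp (List.Mem.tail _ (List.Mem.head _))
      have b1 := HF.mp (.mp (.thm (.andE1 _ _)) h1) hP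
      have b2 := HF.mp (.mp (.thm (.andE2 _ _)) h1) hP
      have pair : HF X [P, ((P.imp (Formula.box F1)).and (P.imp (Formula.box F2)))]
          (Formula.box (F1.and F2)) :=
        .mp (.mp (.thm (Hck.k1 F2 (F1.and F2))) (.mp (.thm hk1) b1)) b2
      exact .mp (.thm hbox) pair
end

section
/- Let X ⊆ {d,t,b,4,5}, and let r be an instance, with premises Γ₁, Γ₂ and conclusion Γ₃, of one of the rules ∧∘, ∨•, ⊃•, or cut. Then (fm(Γ₁)∧fm(Γ₂))⊃fm(Γ₃) is provable in HCK+X. -/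
/-! Each of the four rules changes a single hole, and its local form is an intuitionistic
tautology, such as `((A ⊃ P) ∧ (B ⊃ P)) ⊃ ((A ∨ B) ⊃ P)` for `∨•`. Going outwards from the
hole, the corresponding formula is built by `Φ ⊃ _`, `Φ ∧ _` and `□`, each of which preserves
provability of `(P₁ ∧ P₂) ⊃ P₃` (for `□` by necessitation and `k1`). For `⊃•` and cut the
first premise lives in the pruned context `Γ↓ = Γ'{Λ{ }}`, so inside `Λ` it has a box where
the second premise has a diamond; `k2`, in the mixed form `(□P₁ ∧ ◇P₂) ⊃ ◇P₃`, carries `A`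
down to the hole. -/

theorem Hck.imp_self {X : Set Ax} (A : Formula) : Hck X (A.imp A) :=
  ((Hck.imp2 A (A.imp A) A).mp (Hck.imp1 A (A.imp A))).mp (Hck.imp1 A A)

/-- `Deduces X [C₁, …, Cₙ] A` unfolds to `Cₙ ⊃ … ⊃ C₁ ⊃ A`: the head of the list is the
innermost hypothesis, so that `Deduces.cons_iff` is definitional. -/
@[irreducible] def Deduces (X : Set Ax) (Θ : List Formula) (A : Formula) : Prop :=
  Hck X (Θ.foldl (fun a c => c.imp a) A)

namespace Deduces

variable {X : Set Ax} {Θ : List Formula} {A B C : Formula}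

theorem cons_iff : Deduces X (A :: Θ) B ↔ Deduces X Θ (A.imp B) := by
  unfold Deduces; rfl

theorem intro (h : Deduces X (A :: Θ) B) : Deduces X Θ (A.imp B) :=
  cons_iff.mp h

theorem hck_of_nil (h : Deduces X [] A) : Hck X A := by
  unfold Deduces at h; exact h

theorem of_hck (h : Hck X A) : Deduces X Θ A := by
  induction Θ generalizing A with
  | nil => unfold Deduces; exact h
  | cons C Θ ih => exact cons_iff.mpr (ih ((Hck.imp1 A C).mp h))

theorem mp (hAB : Deduces X Θ (A.imp B)) (hA : Deduces X Θ A) : Deduces X Θ B := by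
  induction Θ generalizing A B with
  | nil => unfold Deduces at *; exact hAB.mp hA
  | cons C Θ ih =>
    rw [cons_iff] at *
    exact ih (ih (of_hck (Hck.imp2 C A B)) hAB) hA

theorem weaken (h : Deduces X Θ A) : Deduces X (C :: Θ) A :=
  cons_iff.mpr (mp (of_hck (Hck.imp1 A C)) h)

theorem hyp (h : A ∈ Θ) : Deduces X Θ A := by
  induction Θ with
  | nil => cases h
  | cons C Θ ih =>
    rcases List.mem_cons.mp h with rfl | h
    · exact cons_iff.mpr (of_hck (Hck.imp_self A))
    · exact weaken (ih h)

theorem and_intro (hA : Deduces X Θ A) (hB : Deduces X Θ B) : Deduces X Θ (A.and B) :=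
  mp (mp (of_hck (Hck.andI A B)) hA) hB

theorem and_left (h : Deduces X Θ (A.and B)) : Deduces X Θ A :=
  mp (of_hck (Hck.andE1 A B)) h

theorem and_right (h : Deduces X Θ (A.and B)) : Deduces X Θ B :=
  mp (of_hck (Hck.andE2 A B)) h

end Deduces

namespace Hck

open Deduces

variable {X : Set Ax} {Φ A B C : Formula}

theorem box_mono (h : Hck X (A.imp B)) : Hck X (A.box.imp B.box) :=
  (Hck.k1 A B).mp (Hck.nec h)

theorem curry (h : Hck X ((A.and B).imp C)) : Hck X (A.imp (B.imp C)) :=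
  hck_of_nil <| intro <| intro <| Deduces.mp (of_hck h) (and_intro (hyp (by simp)) (hyp (by simp)))

theorem and_imp_under_imp (h : Hck X ((A.and B).imp C)) :
    Hck X (((Φ.imp A).and (Φ.imp B)).imp (Φ.imp C)) := by
  refine hck_of_nil <| intro <| intro ?_
  have hΦ : Deduces X [Φ, (Φ.imp A).and (Φ.imp B)] Φ := hyp (by simp)
  have hprem : Deduces X [Φ, (Φ.imp A).and (Φ.imp B)] ((Φ.imp A).and (Φ.imp B)) :=
    hyp (by simp)
  exact Deduces.mp (of_hck h)
    (and_intro (Deduces.mp (and_left hprem) hΦ) (Deduces.mp (and_right hprem) hΦ))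

theorem and_imp_under_and_imp {L₁ R₁ L₂ R₂ L₃ R₃ : Formula}
    (h : Hck X (((L₁.imp R₁).and (L₂.imp R₂)).imp (L₃.imp R₃))) :
    Hck X ((((Φ.and L₁).imp R₁).and ((Φ.and L₂).imp R₂)).imp ((Φ.and L₃).imp R₃)) := by
  refine hck_of_nil <| intro <| intro ?_
  set Θ := [Φ.and L₃, ((Φ.and L₁).imp R₁).and ((Φ.and L₂).imp R₂)]
  have hprem : Deduces X Θ (((Φ.and L₁).imp R₁).and ((Φ.and L₂).imp R₂)) :=
    hyp (by simp [Θ])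
  have hΦL₃ : Deduces X Θ (Φ.and L₃) := hyp (by simp [Θ])
  have hΦ := and_left hΦL₃
  have hL₁ : Deduces X Θ (L₁.imp R₁) :=
    intro <| Deduces.mp (weaken (and_left hprem)) (and_intro (weaken hΦ) (hyp (by simp)))
  have hL₂ : Deduces X Θ (L₂.imp R₂) :=
    intro <| Deduces.mp (weaken (and_right hprem)) (and_intro (weaken hΦ) (hyp (by simp)))
  exact Deduces.mp (Deduces.mp (of_hck h) (and_intro hL₁ hL₂)) (and_right hΦL₃)

theorem and_imp_under_and (h : Hck X ((A.and B).imp C)) :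
    Hck X (((Φ.imp A).and (Φ.and B)).imp (Φ.and C)) := by
  refine hck_of_nil <| intro ?_
  have hprem : Deduces X [(Φ.imp A).and (Φ.and B)] ((Φ.imp A).and (Φ.and B)) :=
    hyp (by simp)
  have hΦ := and_left (and_right hprem)
  exact and_intro hΦ (Deduces.mp (of_hck h)
    (and_intro (Deduces.mp (and_left hprem) hΦ) (and_right (and_right hprem))))

theorem and_imp_under_box (h : Hck X ((A.and B).imp C)) :
    Hck X ((A.box.and B.box).imp C.box) := by
  refine hck_of_nil <| intro ?_
  have hprem : Deduces X [A.box.and B.box] (A.box.and B.box) := hyp (by simp)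
  exact Deduces.mp (Deduces.mp (of_hck (Hck.k1 B C))
    (Deduces.mp (of_hck (box_mono (curry h))) (and_left hprem))) (and_right hprem)

theorem and_imp_under_dia (h : Hck X ((A.and B).imp C)) :
    Hck X ((A.box.and B.dia).imp C.dia) := by
  refine hck_of_nil <| intro ?_
  have hprem : Deduces X [A.box.and B.dia] (A.box.and B.dia) := hyp (by simp)
  exact Deduces.mp (Deduces.mp (of_hck (Hck.k2 B C))
    (Deduces.mp (of_hck (box_mono (curry h))) (and_left hprem))) (and_right hprem)

theorem contra_and_imp {P Q O : Formula} (h : Hck X ((A.and P).imp Q)) :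
    Hck X ((A.and (Q.imp O)).imp (P.imp O)) := by
  refine hck_of_nil <| intro <| intro ?_
  have hprem : Deduces X [P, A.and (Q.imp O)] (A.and (Q.imp O)) := hyp (by simp)
  exact Deduces.mp (and_right hprem)
    (Deduces.mp (of_hck h) (and_intro (and_left hprem) (hyp (by simp))))

theorem or_elim_and (A B C : Formula) :
    Hck X (((A.imp C).and (B.imp C)).imp ((A.or B).imp C)) := by
  refine hck_of_nil <| intro ?_
  have hprem : Deduces X [(A.imp C).and (B.imp C)] ((A.imp C).and (B.imp C)) := hyp (by simp)
  exact Deduces.mp (Deduces.mp (of_hck (Hck.orE A B C)) (and_left hprem)) (and_right hprem)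

theorem and_imp_mp (A B : Formula) : Hck X ((A.and (A.imp B)).imp B) := by
  refine hck_of_nil <| intro ?_
  have hprem : Deduces X [A.and (A.imp B)] (A.and (A.imp B)) := hyp (by simp)
  exact Deduces.mp (and_right hprem) (and_left hprem)

end Hck

namespace OutCtx

variable {X : Set Ax}

theorem and_imp_fillR (Γ : OutCtx) {Ψ₁ Ψ₂ Ψ₃ : RHS}
    (h : Hck X ((Ψ₁.fm.and Ψ₂.fm).imp Ψ₃.fm)) :
    Hck X (((Γ.fillR Ψ₁).fm.and (Γ.fillR Ψ₂).fm).imp (Γ.fillR Ψ₃).fm) := by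
  induction Γ with
  | hole Φ => exact Hck.and_imp_under_imp h
  | cons Φ Γ ih => exact Hck.and_imp_under_imp (Hck.and_imp_under_box ih)

theorem and_imp_fillF (Γ : OutCtx) {S₁ S₂ S₃ : FullSeq}
    (h : Hck X ((S₁.fm.and S₂.fm).imp S₃.fm)) :
    Hck X (((Γ.fillF S₁).fm.and (Γ.fillF S₂).fm).imp (Γ.fillF S₃).fm) := by
  induction Γ with
  | hole Φ => exact Hck.and_imp_under_and_imp h
  | cons Φ Γ ih => exact Hck.and_imp_under_imp (Hck.and_imp_under_box ih)

theorem and_imp_fillR_fillL (Γ : OutCtx) {A : Formula} {Δ₁ Δ₂ : LHS}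
    (h : Hck X ((A.and Δ₁.fm).imp Δ₂.fm)) :
    Hck X (((Γ.fillR (.fml A)).fm.and (Γ.fillL Δ₁).fm).imp (Γ.fillL Δ₂).fm) := by
  induction Γ with
  | hole Φ => exact Hck.and_imp_under_and h
  | cons Φ Γ ih => exact Hck.and_imp_under_and (Hck.and_imp_under_dia ih)

theorem comp_fillR (Γ Γ' : OutCtx) (Ψ : RHS) :
    (Γ.comp Γ').fillR Ψ = Γ.fillF (Γ'.fillR Ψ) := by
  induction Γ with
  | hole Φ => cases Γ' <;> rfl
  | cons Φ Γ ih => simp only [comp, fillR, fillF, ih]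

end OutCtx

theorem InCtx.and_imp_prune_fill {X : Set Ax} (Γ : InCtx) {A : Formula} {Δ₁ Δ₂ : LHS}
    (h : Hck X ((A.and Δ₁.fm).imp Δ₂.fm)) :
    Hck X (((Γ.prune.fillR (.fml A)).fm.and (Γ.fill Δ₂).fm).imp (Γ.fill Δ₁).fm) := by
  rw [InCtx.prune, OutCtx.comp_fillR]
  exact Γ.outer.and_imp_fillF (Hck.contra_and_imp (Γ.inner.and_imp_fillR_fillL h))

theorem statement11_general (X : Set Ax) (r : RuleName)
    (Γ₁ Γ₂ Γ₃ : FullSeq) (h : Step r [Γ₁, Γ₂] Γ₃) :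
    Hck X ((Γ₁.fm.and Γ₂.fm).imp Γ₃.fm) := by
  cases h with
  | andR Γ A B => exact Γ.and_imp_fillR (Hck.imp_self _)
  | orL Γ Ψ A B => exact Γ.and_imp_fillF (Hck.or_elim_and A B Ψ.fm)
  | impL Γ A B => exact Γ.and_imp_prune_fill (Hck.and_imp_mp A B)
  | cut Γ A => exact Γ.and_imp_prune_fill (Hck.andE1 A .top)

/-- Lemma 4.9: for any instance, with premises Γ₁, Γ₂ and
conclusion Γ₃, of one of the rules ∧∘, ∨•, ⊃•, cut, the formula
(fm(Γ₁)∧fm(Γ₂))⊃fm(Γ₃) is provable in HCK+X. -/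
theorem statement11 (X : Set Ax) (r : RuleName)
    (hr : r = RuleName.andR ∨ r = RuleName.orL ∨ r = RuleName.impL ∨
          r = RuleName.cut)
    (Γ₁ Γ₂ Γ₃ : FullSeq) (h : Step r [Γ₁, Γ₂] Γ₃) :
    Hck X ((Γ₁.fm.and Γ₂.fm).imp Γ₃.fm) :=
  statement11_general X r Γ₁ Γ₂ Γ₃ h
end

section
/- For arbitrary formulas S and D, the following are theorems of HCK+b: (i) (S∧◇D)⊃◇(◇S∧D); (ii) □(D⊃□S)⊃(◇D⊃S); (iii) □(◇S⊃D)⊃(S⊃□D). -/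
namespace HckLemmas

variable {X : Set Ax} {A B C P Q R : Formula}

/-- S combinator at theorem level. -/
lemma appS (h1 : Hck X (P.imp (Q.imp R))) (h2 : Hck X (P.imp Q)) :
    Hck X (P.imp R) :=
  Hck.mp (Hck.mp (Hck.imp2 P Q R) h1) h2

/-- Weakening: from ⊢ A infer ⊢ P ⊃ A. -/
lemma wk (h : Hck X A) : Hck X (P.imp A) :=
  Hck.mp (Hck.imp1 A P) h

/-- Apply a theorem under an implication. -/
lemma apR (h1 : Hck X (P.imp (Q.imp R))) (h2 : Hck X Q) : Hck X (P.imp R) :=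
  appS h1 (wk h2)

/-- Syllogism: composition of implications. -/
lemma syl (h1 : Hck X (A.imp B)) (h2 : Hck X (B.imp C)) : Hck X (A.imp C) :=
  appS (wk h2) h1

/-- Postcomposition internalized. -/
lemma sylT (h : Hck X (B.imp C)) : Hck X ((A.imp B).imp (A.imp C)) :=
  Hck.mp (Hck.imp2 A B C) (wk h)

/-- Precomposition internalized. -/
lemma preT (h : Hck X (A.imp B)) : Hck X ((B.imp C).imp (A.imp C)) :=
  apR (syl (Hck.imp1 (B.imp C) A) (Hck.imp2 A B C)) h

end HckLemmas

open HckLemmas in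
/-- Lemma 4.11, (i)-(iii): for arbitrary formulas S and D,
(S∧◇D)⊃◇(◇S∧D), □(D⊃□S)⊃(◇D⊃S), and □(◇S⊃D)⊃(S⊃□D) are theorems of HCK+b. -/
theorem statement12 (S D : Formula) :
    Hck {Ax.b} ((S.and D.dia).imp ((S.dia.and D).dia)) ∧
    Hck {Ax.b} (((D.imp S.box).box).imp (D.dia.imp S)) ∧
    Hck {Ax.b} (((S.dia.imp D).box).imp (S.imp D.box)) := by
  have hbS : Hck {Ax.b} (axForm Ax.b S) := Hck.ax S rfl
  have b1 : Hck {Ax.b} (S.imp (S.dia.box)) :=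
    Hck.mp (Hck.andE1 _ _) hbS
  refine ⟨?_, ?_, ?_⟩
  · -- (S ∧ ◇D) ⊃ ◇(◇S ∧ D)
    set Xf := S.and D.dia
    have f1 : Hck {Ax.b} (Xf.imp S) := Hck.andE1 _ _
    have f2 : Hck {Ax.b} (Xf.imp D.dia) := Hck.andE2 _ _
    -- □(◇S ⊃ (D ⊃ ◇S∧D))
    have nAndI : Hck {Ax.b} (Formula.box (S.dia.imp (D.imp (S.dia.and D)))) :=
      Hck.nec (Hck.andI _ _)
    -- □◇S ⊃ □(D ⊃ ◇S∧D)
    have hk1 : Hck {Ax.b} ((S.dia.box).imp (Formula.box (D.imp (S.dia.and D)))) :=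
      Hck.mp (Hck.k1 _ _) nAndI
    -- Xf ⊃ □(D ⊃ ◇S∧D)
    have g : Hck {Ax.b} (Xf.imp (Formula.box (D.imp (S.dia.and D)))) :=
      syl (syl f1 b1) hk1
    -- Xf ⊃ (◇D ⊃ ◇(◇S∧D))
    have g2 : Hck {Ax.b} (Xf.imp ((D.dia).imp ((S.dia.and D).dia))) :=
      syl g (Hck.k2 _ _)
    exact appS g2 f2
  · -- □(D ⊃ □S) ⊃ (◇D ⊃ S)
    have hb2 : Hck {Ax.b} ((S.box.dia).imp S) := Hck.mp (Hck.andE2 _ _) hbS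
    have hk2 : Hck {Ax.b} ((Formula.box (D.imp S.box)).imp
        ((D.dia).imp (S.box.dia))) := Hck.k2 _ _
    exact syl hk2 (sylT hb2)
  · -- □(◇S ⊃ D) ⊃ (S ⊃ □D)
    have hk1 : Hck {Ax.b} ((Formula.box (S.dia.imp D)).imp
        ((S.dia.box).imp D.box)) := Hck.k1 _ _
    exact syl hk1 (preT b1)
end

section
/- For arbitrary formulas S and D, the following are theorems of HCK+5: (i) (◇S∧◇D)⊃◇(◇S∧D); (ii) □(D⊃□S)⊃(◇D⊃□S); (iii) □(◇S⊃D)⊃(◇S⊃□D). -/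
namespace HckAux

variable {X : Set Ax}

/-- Composition of implications. -/
lemma comp {A B C : Formula} (h1 : Hck X (A.imp B)) (h2 : Hck X (B.imp C)) :
    Hck X (A.imp C) := by
  have hac : Hck X (A.imp (B.imp C)) := Hck.mp (Hck.imp1 (B.imp C) A) h2
  exact Hck.mp (Hck.mp (Hck.imp2 A B C) hac) h1

/-- S combinator, applied. -/
lemma scomb {A B C : Formula} (h1 : Hck X (A.imp (B.imp C))) (h2 : Hck X (A.imp B)) :
    Hck X (A.imp C) :=
  Hck.mp (Hck.mp (Hck.imp2 A B C) h1) h2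

/-- Axiom 5, first conjunct: ◇A ⊃ □◇A. -/
lemma five1 (h : Ax.five ∈ X) (A : Formula) : Hck X (A.dia.imp A.dia.box) :=
  Hck.mp (Hck.andE1 _ _) (Hck.ax (x := Ax.five) A h)

/-- Axiom 5, second conjunct: ◇□A ⊃ □A. -/
lemma five2 (h : Ax.five ∈ X) (A : Formula) : Hck X (A.box.dia.imp A.box) :=
  Hck.mp (Hck.andE2 _ _) (Hck.ax (x := Ax.five) A h)

end HckAux

/-- Lemma 4.11, (iv)-(vi): for arbitrary formulas S and D,
(◇S∧◇D)⊃◇(◇S∧D), □(D⊃□S)⊃(◇D⊃□S), and □(◇S⊃D)⊃(◇S⊃□D) are theorems of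
HCK+5. -/
theorem statement13 (S D : Formula) :
    Hck {Ax.five} ((S.dia.and D.dia).imp ((S.dia.and D).dia)) ∧
    Hck {Ax.five} (((D.imp S.box).box).imp (D.dia.imp S.box)) ∧
    Hck {Ax.five} (((S.dia.imp D).box).imp (S.dia.imp D.box)) := by
  have h5 : Ax.five ∈ ({Ax.five} : Set Ax) := rfl
  refine ⟨?_, ?_, ?_⟩
  · -- (◇S∧◇D) ⊃ ◇(◇S∧D)
    have h1 : Hck {Ax.five} ((S.dia.and D.dia).imp S.dia) := Hck.andE1 _ _
    have h2 : Hck {Ax.five} ((S.dia.and D.dia).imp D.dia) := Hck.andE2 _ _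
    have hnec : Hck {Ax.five} (Formula.box (S.dia.imp (D.imp (S.dia.and D)))) :=
      Hck.nec (Hck.andI _ _)
    have hk1 : Hck {Ax.five} (S.dia.box.imp (Formula.box (D.imp (S.dia.and D)))) :=
      Hck.mp (Hck.k1 _ _) hnec
    have hk2 : Hck {Ax.five} ((Formula.box (D.imp (S.dia.and D))).imp
        (D.dia.imp ((S.dia.and D).dia))) := Hck.k2 _ _
    have hchain : Hck {Ax.five} ((S.dia.and D.dia).imp (D.dia.imp ((S.dia.and D).dia))) :=
      HckAux.comp (HckAux.comp (HckAux.comp h1 (HckAux.five1 h5 S)) hk1) hk2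
    exact HckAux.scomb hchain h2
  · -- □(D⊃□S) ⊃ (◇D⊃□S)
    have hk2 : Hck {Ax.five} (((D.imp S.box).box).imp (D.dia.imp S.box.dia)) := Hck.k2 _ _
    have h5b : Hck {Ax.five} (S.box.dia.imp S.box) := HckAux.five2 h5 S
    have hcomp : Hck {Ax.five} ((D.dia.imp S.box.dia).imp (D.dia.imp S.box)) :=
      Hck.mp (Hck.imp2 _ _ _) (Hck.mp (Hck.imp1 _ _) h5b)
    exact HckAux.comp hk2 hcomp
  · -- □(◇S⊃D) ⊃ (◇S⊃□D)
    have hk1 : Hck {Ax.five} (((S.dia.imp D).box).imp (S.dia.box.imp D.box)) := Hck.k1 _ _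
    have h5a : Hck {Ax.five} (S.dia.imp S.dia.box) := HckAux.five1 h5 S
    have hcomp : Hck {Ax.five} ((S.dia.box.imp D.box).imp (S.dia.imp D.box)) :=
      HckAux.comp (Hck.imp1 _ _)
        (HckAux.scomb (Hck.imp2 _ _ _) (Hck.mp (Hck.imp1 _ _) h5a))
    exact HckAux.comp hk1 hcomp
end

section
/- For arbitrary formulas A and B, the axioms k3: ◇(A∨B)⊃(◇A∨◇B) and k5: ◇⊥⊃⊥ are theorems of HCK+b. -/
/-- Syllogism: composition of implications in Hck. -/
lemma Hck.comp {X : Set Ax} {A B C : Formula}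
    (h1 : Hck X (A.imp B)) (h2 : Hck X (B.imp C)) : Hck X (A.imp C) :=
  Hck.mp (Hck.mp (Hck.imp2 A B C) (Hck.mp (Hck.imp1 (B.imp C) A) h2)) h1

/-- First component of axiom b: A ⊃ □◇A. -/
lemma Hck.b1 (A : Formula) : Hck {Ax.b} (A.imp A.dia.box) :=
  Hck.mp (Hck.andE1 _ _) (Hck.ax (x := .b) A rfl)

/-- Second component of axiom b: ◇□A ⊃ A. -/
lemma Hck.b2 (A : Formula) : Hck {Ax.b} ((A.box.dia).imp A) :=
  Hck.mp (Hck.andE2 _ _) (Hck.ax (x := .b) A rfl)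

/-- for arbitrary formulas A and B, the axioms
k3: ◇(A∨B)⊃(◇A∨◇B) and k5: ◇⊥⊃⊥ are theorems of HCK+b. -/
theorem statement15 (A B : Formula) :
    Hck {Ax.b} (((A.or B).dia).imp (A.dia.or B.dia)) ∧
    Hck {Ax.b} ((Formula.bot.dia).imp Formula.bot) := by
  constructor
  · -- k3
    -- A ⊃ □(◇A∨◇B)
    have hA : Hck {Ax.b} (A.imp (Formula.box (A.dia.or B.dia))) :=
      Hck.comp (Hck.b1 A)
        (Hck.mp (Hck.k1 A.dia (A.dia.or B.dia)) (Hck.nec (Hck.orI1 A.dia B.dia)))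
    have hB : Hck {Ax.b} (B.imp (Formula.box (A.dia.or B.dia))) :=
      Hck.comp (Hck.b1 B)
        (Hck.mp (Hck.k1 B.dia (A.dia.or B.dia)) (Hck.nec (Hck.orI2 A.dia B.dia)))
    have hOr : Hck {Ax.b} ((A.or B).imp (Formula.box (A.dia.or B.dia))) :=
      Hck.mp (Hck.mp (Hck.orE A B (Formula.box (A.dia.or B.dia))) hA) hB
    have hDia : Hck {Ax.b} (((A.or B).dia).imp ((Formula.box (A.dia.or B.dia)).dia)) :=
      Hck.mp (Hck.k2 _ _) (Hck.nec hOr)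
    exact Hck.comp hDia (Hck.b2 (A.dia.or B.dia))
  · -- k5
    have h1 : Hck {Ax.b} ((Formula.bot.dia).imp ((Formula.box Formula.bot).dia)) :=
      Hck.mp (Hck.k2 _ _) (Hck.nec (Hck.exfalso (Formula.box Formula.bot)))
    exact Hck.comp h1 (Hck.b2 Formula.bot)
end
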